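/- Let g₀ be a natural number, let c₀ be a real number with c₀ > (3/2)·√(2g₀+2), and let d and g be integers with g ≥ 0. Assume: (i) g ≥ g₀ − c₀(1−c₀)/2 + |d|(1−|d|)/2; (ii) if d is even, then 2g + 1 ≥ |d²/2 − 1|; and (iii) for every odd prime p dividing d, 2g + 1 ≥ |((p²−1)/(2p²))·d² − 1|. Then g ≥ g₀. -/

import Mathlib

/-!
If `|d| ≤ c₀`, then `t ↦ t (1 - t)` is no larger at `c₀` than at `|d|` (as `c₀ ≥ 1`), so (i) alone
gives `g ≥ g₀`. Otherwise `d² > c₀² > (9/2)(g₀ + 1)` and `d ≠ ±1`, so `d` has a prime divisor `p`: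
by (ii) if `p = 2`, by (iii) if `p` is odd, `2g + 2 ≥ κ d²` with `κ ≥ 4/9`, whence `g > g₀`.
-/

lemma one_lt_and_lt_sq_of_mul_sqrt_lt {n c : ℝ} (hn : 0 ≤ n) (hc : 3 / 2 * √(2 * n + 2) < c) :
    1 < c ∧ 9 / 2 * (n + 1) < c ^ 2 := by
  have hsq := Real.sq_sqrt (by positivity : (0 : ℝ) ≤ 2 * n + 2)
  have hs := Real.sqrt_nonneg (2 * n + 2)
  have hlt : 9 / 2 * (n + 1) < c ^ 2 := by nlinarith
  exact ⟨by nlinarith, hlt⟩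

lemma le_of_le_add_mul_one_sub {g g₀ c x : ℝ} (hc : 1 ≤ c) (hx : 0 ≤ x) (hxc : x ≤ c)
    (h : g₀ - c * (1 - c) / 2 + x * (1 - x) / 2 ≤ g) : g₀ ≤ g := by
  nlinarith [mul_nonneg (sub_nonneg.mpr hxc) (by linarith : (0 : ℝ) ≤ c + x - 1)]

lemma lt_of_mul_sq_sub_one_le {g g₀ κ d : ℝ} (hκ : 4 / 9 ≤ κ) (hd : 9 / 2 * (g₀ + 1) < d ^ 2)
    (h : κ * d ^ 2 - 1 ≤ 2 * g + 1) : g₀ < g := by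
  nlinarith [mul_le_mul_of_nonneg_right hκ (sq_nonneg d)]

lemma four_ninths_le_sq_sub_one_div {p : ℝ} (hp : 3 ≤ p) : 4 / 9 ≤ (p ^ 2 - 1) / (2 * p ^ 2) := by
  rw [le_div_iff₀ (by positivity)]
  nlinarith

theorem stmt_4_general (g₀ : ℕ) (c₀ : ℝ) (hc₀ : c₀ > (3 / 2) * Real.sqrt (2 * (g₀ : ℝ) + 2))
    (d g : ℤ)
    (h1 : (g : ℝ) ≥ (g₀ : ℝ) - c₀ * (1 - c₀) / 2 + |(d : ℝ)| * (1 - |(d : ℝ)|) / 2)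
    (h2 : Even d → (2 * (g : ℝ) + 1) ≥ |(d : ℝ) ^ 2 / 2 - 1|)
    (h3 : ∀ p : ℕ, p.Prime → Odd p → (p : ℤ) ∣ d →
      (2 * (g : ℝ) + 1) ≥ |(((p : ℝ) ^ 2 - 1) / (2 * (p : ℝ) ^ 2)) * (d : ℝ) ^ 2 - 1|) :
    g ≥ (g₀ : ℤ) := by
  obtain ⟨hc₀_one, hc₀_sq⟩ := one_lt_and_lt_sq_of_mul_sqrt_lt (Nat.cast_nonneg g₀) hc₀
  rcases le_or_gt |(d : ℝ)| c₀ with hsmall | hlarge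
  · exact_mod_cast le_of_le_add_mul_one_sub hc₀_one.le (abs_nonneg _) hsmall h1
  have hd_sq : 9 / 2 * ((g₀ : ℝ) + 1) < (d : ℝ) ^ 2 := by
    rw [← sq_abs]
    nlinarith
  suffices ∃ κ : ℝ, 4 / 9 ≤ κ ∧ κ * (d : ℝ) ^ 2 - 1 ≤ 2 * g + 1 by
    obtain ⟨κ, hκ, hbound⟩ := this
    exact_mod_cast (lt_of_mul_sq_sub_one_le hκ hd_sq hbound).le
  have hd_unit : d.natAbs ≠ 1 := by
    intro h
    rcases Int.natAbs_eq_iff.mp h with rfl | rfl <;> norm_num at hlarge <;> linarith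
  obtain ⟨p, hp, hpd⟩ := Nat.exists_prime_and_dvd hd_unit
  rcases hp.eq_two_or_odd' with rfl | hodd
  · refine ⟨1 / 2, by norm_num, ?_⟩
    have heven : Even d := even_iff_two_dvd.mpr (Int.natCast_dvd.mpr hpd)
    linarith [(le_abs_self _).trans (h2 heven)]
  · have hp3 : (3 : ℝ) ≤ p := by
      have := hp.two_le
      obtain ⟨k, rfl⟩ := hodd
      exact_mod_cast (show 3 ≤ 2 * k + 1 by omega)
    exact ⟨_, four_ninths_le_sq_sub_one_div hp3,
      (le_abs_self _).trans (h3 p hp hodd (Int.natCast_dvd.mpr hpd))⟩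

theorem stmt_4 (g₀ : ℕ) (c₀ : ℝ) (hc₀ : c₀ > (3 / 2) * Real.sqrt (2 * (g₀ : ℝ) + 2))
    (d g : ℤ) (hg : 0 ≤ g)
    (h1 : (g : ℝ) ≥ (g₀ : ℝ) - c₀ * (1 - c₀) / 2 + |(d : ℝ)| * (1 - |(d : ℝ)|) / 2)
    (h2 : Even d → (2 * (g : ℝ) + 1) ≥ |(d : ℝ) ^ 2 / 2 - 1|)
    (h3 : ∀ p : ℕ, p.Prime → Odd p → (p : ℤ) ∣ d →
      (2 * (g : ℝ) + 1) ≥ |(((p : ℝ) ^ 2 - 1) / (2 * (p : ℝ) ^ 2)) * (d : ℝ) ^ 2 - 1|) :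
    g ≥ (g₀ : ℤ) :=
  stmt_4_general g₀ c₀ hc₀ d g h1 h2 h3
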